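/- Let d, v ∈ ℝⁿ and f ∈ ℝ. Then the (n+1)×(n+1) symmetric block matrix with upper-left block diag(d₁, …, dₙ), upper-right block v, lower-left block vᵀ, and lower-right entry f is positive semidefinite if and only if there exists t ∈ ℝⁿ such that f ≥ Σᵢ tᵢ and (vᵢ, tᵢ, dᵢ) ∈ Q for every i ∈ {1, …, n}. -/

import Mathlib

/-! The arrow matrix is positive semidefinite iff its quadratic form
`∑ᵢ (dᵢ aᵢ² + 2 vᵢ aᵢ s) + f s²` is nonnegative, and `(x, y, z) ∈ Q` says exactly that the
`2 × 2` form `z a² + 2 x a s + y s²` is nonnegative. Given `t`, the arrow form is a sum of such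
`2 × 2` forms in `(aᵢ, s)` plus `(f - ∑ tᵢ) s²`. Conversely, testing on vectors supported on
`{i, n+1}` puts `(vᵢ, f, dᵢ)` in `Q`, so `tᵢ = vᵢ² / dᵢ` is admissible (with `vᵢ² / 0 = 0`, which is
right because `dᵢ = 0` forces `vᵢ = 0`), and the test vector `aᵢ = -vᵢ / dᵢ`, `s = 1` gives
`f ≥ ∑ tᵢ`. -/

open Matrix

/-- The set `Q = {(x, y, z) ∈ ℝ³ : ‖(2x, y − z)‖₂ ≤ y + z}`. -/
def socQ : Set (ℝ × ℝ × ℝ) :=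
  {p | Real.sqrt (4 * p.1 ^ 2 + (p.2.1 - p.2.2) ^ 2) ≤ p.2.1 + p.2.2}

open Finset

theorem mem_socQ_iff {x y z : ℝ} : (x, y, z) ∈ socQ ↔ 0 ≤ y ∧ 0 ≤ z ∧ x ^ 2 ≤ y * z := by
  simp only [socQ, Set.mem_ofPred_eq, Real.sqrt_le_iff]
  constructor
  · rintro ⟨_, _⟩
    refine ⟨?_, ?_, ?_⟩ <;> nlinarith [sq_nonneg x]
  · rintro ⟨hy, hz, hxyz⟩
    exact ⟨by linarith, by nlinarith⟩

theorem mem_socQ_iff_forall_quadratic_nonneg {x y z : ℝ} :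
    (x, y, z) ∈ socQ ↔ ∀ a s : ℝ, 0 ≤ z * a ^ 2 + 2 * x * a * s + y * s ^ 2 := by
  rw [mem_socQ_iff]
  constructor
  · rintro ⟨hy, hz, hxyz⟩ a s
    rcases hz.lt_or_eq with hz | rfl
    · nlinarith [sq_nonneg (z * a + x * s), mul_nonneg (sub_nonneg.2 hxyz) (sq_nonneg s)]
    · obtain rfl : x = 0 := by nlinarith [sq_nonneg x]
      nlinarith [sq_nonneg s]
  · intro h
    have hy : 0 ≤ y := by simpa using h 0 1
    have hz : 0 ≤ z := by simpa using h 1 0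
    refine ⟨hy, hz, ?_⟩
    rcases hz.lt_or_eq with hz | rfl
    · nlinarith [h (-x) z]
    rcases hy.lt_or_eq with hy | rfl
    · nlinarith [h y (-x)]
    · nlinarith [h (-x) 1]

theorem mem_socQ_sq_div {x y z : ℝ} (h : (x, y, z) ∈ socQ) : (x, x ^ 2 / z, z) ∈ socQ := by
  obtain ⟨-, hz, hxyz⟩ := mem_socQ_iff.1 h
  refine mem_socQ_iff.2 ⟨by positivity, hz, ?_⟩
  rcases eq_or_ne z 0 with rfl | hz
  · simpa using hxyz
  · rw [div_mul_cancel₀ _ hz]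

section ArrowMatrix

variable {ι R : Type*} [DecidableEq ι]

def arrowMatrix [Zero R] (d v : ι → R) (f : R) : Matrix (ι ⊕ Unit) (ι ⊕ Unit) R :=
  fromBlocks (diagonal d) (replicateCol Unit v) (replicateRow Unit v) (of fun _ _ => f)

theorem arrowMatrix_isHermitian [CommSemiring R] [StarRing R] [TrivialStar R]
    (d v : ι → R) (f : R) : (arrowMatrix d v f).IsHermitian := by
  refine isHermitian_fromBlocks_iff.2 ⟨isHermitian_diagonal_of_self_adjoint _ (.all d), ?_, ?_, ?_⟩
  all_goals ext; simp

theorem sumElim_dotProduct_arrowMatrix_mulVec [Fintype ι] [CommRing R] (d v a : ι → R) (f s : R) :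
    (a ⊕ᵥ fun _ => s) ⬝ᵥ arrowMatrix d v f *ᵥ (a ⊕ᵥ fun _ => s) =
      ∑ i, (d i * a i ^ 2 + 2 * v i * a i * s) + f * s ^ 2 := by
  simp only [arrowMatrix, fromBlocks_mulVec, Sum.elim_comp_inl, Sum.elim_comp_inr,
    sumElim_dotProduct_sumElim]
  simp only [dotProduct, Pi.add_apply, mulVec, diagonal_apply, ite_mul, zero_mul, sum_ite_eq,
    mem_univ, ↓reduceIte, univ_unique, PUnit.default_eq_unit, replicateCol_apply, sum_const,
    card_singleton, one_smul, replicateRow_apply, of_apply]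
  rw [mul_add, mul_sum, ← add_assoc, ← sum_add_distrib]
  congr 1
  · exact sum_congr rfl fun i _ => by ring
  · ring

theorem arrowMatrix_posSemidef_iff [Fintype ι] [CommRing R] [PartialOrder R] [StarRing R]
    [TrivialStar R] (d v : ι → R) (f : R) :
    (arrowMatrix d v f).PosSemidef ↔
      ∀ (a : ι → R) (s : R), 0 ≤ ∑ i, (d i * a i ^ 2 + 2 * v i * a i * s) + f * s ^ 2 := by
  rw [posSemidef_iff_dotProduct_mulVec, and_iff_right (arrowMatrix_isHermitian d v f)]
  refine ⟨fun h a s => ?_, fun h x => ?_⟩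
  · simpa [sumElim_dotProduct_arrowMatrix_mulVec] using h (a ⊕ᵥ fun _ => s)
  · have hx : x = (x ∘ Sum.inl) ⊕ᵥ fun _ => x (Sum.inr ()) := by
      ext (_ | _) <;> rfl
    rw [star_trivial, hx, sumElim_dotProduct_arrowMatrix_mulVec]
    exact h _ _

end ArrowMatrix

section

variable {ι : Type*} [Fintype ι] {d v : ι → ℝ} {f : ℝ}

theorem exists_soc_of_forall_quadratic_nonneg [DecidableEq ι]
    (h : ∀ (a : ι → ℝ) (s : ℝ), 0 ≤ ∑ i, (d i * a i ^ 2 + 2 * v i * a i * s) + f * s ^ 2) :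
    ∃ t : ι → ℝ, ∑ i, t i ≤ f ∧ ∀ i, (v i, t i, d i) ∈ socQ := by
  have hsoc (i : ι) : (v i, f, d i) ∈ socQ := mem_socQ_iff_forall_quadratic_nonneg.2 fun a s => by
    have := h (Pi.single i a) s
    rwa [Fintype.sum_eq_single i fun j hj => by simp [hj], Pi.single_eq_same] at this
  refine ⟨fun i => v i ^ 2 / d i, ?_, fun i => mem_socQ_sq_div (hsoc i)⟩
  have hmin (i : ι) : d i * (-(v i / d i)) ^ 2 + 2 * v i * (-(v i / d i)) * 1 = -(v i ^ 2 / d i) := by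
    rcases eq_or_ne (d i) 0 with hd | hd
    · simp [hd]
    · field_simp
      ring
  have := h (fun i => -(v i / d i)) 1
  simp only [hmin, sum_neg_distrib] at this
  linarith

theorem quadratic_nonneg_of_soc {t : ι → ℝ} (ht : ∑ i, t i ≤ f)
    (hsoc : ∀ i, (v i, t i, d i) ∈ socQ) (a : ι → ℝ) (s : ℝ) :
    0 ≤ ∑ i, (d i * a i ^ 2 + 2 * v i * a i * s) + f * s ^ 2 :=
  calc 0 ≤ ∑ i, (d i * a i ^ 2 + 2 * v i * a i * s + t i * s ^ 2) :=
        sum_nonneg fun i _ => mem_socQ_iff_forall_quadratic_nonneg.1 (hsoc i) (a i) s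
    _ = ∑ i, (d i * a i ^ 2 + 2 * v i * a i * s) + (∑ i, t i) * s ^ 2 := by
        rw [sum_add_distrib, sum_mul]
    _ ≤ ∑ i, (d i * a i ^ 2 + 2 * v i * a i * s) + f * s ^ 2 := by gcongr

end

theorem arrow_matrix_psd_iff_soc {n : ℕ} (d v : Fin n → ℝ) (f : ℝ) :
    (Matrix.fromBlocks (Matrix.diagonal d) (Matrix.replicateCol Unit v)
        (Matrix.replicateRow Unit v) (Matrix.of fun _ _ => f)).PosSemidef ↔
      ∃ t : Fin n → ℝ, (∑ i, t i) ≤ f ∧ ∀ i : Fin n, (v i, t i, d i) ∈ socQ := by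
  rw [← arrowMatrix, arrowMatrix_posSemidef_iff]
  exact ⟨exists_soc_of_forall_quadratic_nonneg,
    fun ⟨_, ht, hsoc⟩ => quadratic_nonneg_of_soc ht hsoc⟩
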